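/- Let e* ∈ E be a bottleneck edge, let Π be an assignment containing e* with w_{e*} = max_{e∈Π} w_e and Π \ {e*} nonempty, and suppose the set S := {e ∈ E : e ≠ e* and w_e ≥ w_{e*}} is nonempty. Define σ := min( min_{e∈S} (w_e − w_{e*})/2 , min_{e∈Π\{e*}} (w_{e*} − w_e)/2 ). Then σ ≥ 0, and for every perturbation P : E → ℝ with |P(e)| ≤ σ for all e ∈ E, the edge e* is a bottleneck edge of the perturbed weights w + P and Π is a bottleneck assignment of w + P. -/

import Mathlib

/-!
Perturbing every weight by at most `σ` changes the difference of two weights by at most `2σ`.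
By the choice of `σ`, every edge of `Π` other than `e*` stays strictly below `e*`, and every
edge that was at least as heavy as `e*` stays at least as heavy. Since `e*` is a bottleneck
edge, every assignment contains an edge at least as heavy as `e*`; this remains true after the
perturbation, so `Π`, whose maximum edge is still `e*`, remains a bottleneck assignment.
-/

/-- `M` is an assignment on the edge set `E`: every vertex of `V₂` is incident
to exactly one edge of `M` and every vertex of `V₁` to at most one. -/
def IsAssignment {V₁ V₂ : Type*} (E M : Finset (V₁ × V₂)) : Prop :=
  M ⊆ E ∧ (∀ j : V₂, ∃! e, e ∈ M ∧ e.2 = j) ∧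
    ∀ e ∈ M, ∀ e' ∈ M, e.1 = e'.1 → e = e'

/-- `e` is a maximum-weight edge of `M`. -/
def IsMaxEdge {V₁ V₂ : Type*} (w : V₁ × V₂ → ℝ) (M : Finset (V₁ × V₂))
    (e : V₁ × V₂) : Prop :=
  e ∈ M ∧ ∀ e' ∈ M, w e' ≤ w e

/-- `M` is a bottleneck assignment: it is an assignment whose maximum edge
weight is at most the maximum edge weight of any other assignment. -/
def IsBottleneck {V₁ V₂ : Type*} (w : V₁ × V₂ → ℝ) (E M : Finset (V₁ × V₂)) : Prop :=
  IsAssignment E M ∧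
    ∀ M', IsAssignment E M' → ∀ e ∈ M, ∃ e' ∈ M', w e ≤ w e'

/-- `e` is a bottleneck edge: a maximum-weight edge of some bottleneck assignment. -/
def IsBottleneckEdge {V₁ V₂ : Type*} (w : V₁ × V₂ → ℝ) (E : Finset (V₁ × V₂))
    (e : V₁ × V₂) : Prop :=
  ∃ M, IsBottleneck w E M ∧ IsMaxEdge w M e

/-- `S` is an exclusive set for the edge `estar`. -/
def IsExclusive {V₁ V₂ : Type*} (E : Finset (V₁ × V₂)) (estar : V₁ × V₂)
    (S : Finset (V₁ × V₂)) : Prop :=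
  S ⊆ E ∧ estar ∉ S ∧ ∀ M, IsAssignment E M → estar ∈ M ∨ ∃ e ∈ S, e ∈ M

lemma add_le_add_of_add_two_mul_le {a b p q σ : ℝ} (hab : a + 2 * σ ≤ b) (hp : |p| ≤ σ)
    (hq : |q| ≤ σ) : a + p ≤ b + q := by
  linarith [le_abs_self p, neg_abs_le q]

section Bottleneck

variable {V₁ V₂ : Type*} {w P : V₁ × V₂ → ℝ} {E M : Finset (V₁ × V₂)} {e : V₁ × V₂} {σ : ℝ}

lemma IsBottleneckEdge.exists_le (h : IsBottleneckEdge w E e) {M' : Finset (V₁ × V₂)}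
    (hM' : IsAssignment E M') : ∃ f ∈ M', w e ≤ w f :=
  let ⟨_, hbot, hmax⟩ := h
  hbot.2 M' hM' e hmax.1

lemma IsBottleneck.of_isMaxEdge (hM : IsAssignment E M) (hmax : IsMaxEdge w M e)
    (hlow : ∀ M', IsAssignment E M' → ∃ f ∈ M', w e ≤ w f) : IsBottleneck w E M :=
  ⟨hM, fun M' hM' g hg =>
    let ⟨f, hf, hle⟩ := hlow M' hM'
    ⟨f, hf, (hmax.2 g hg).trans hle⟩⟩

lemma IsMaxEdge.add (hmax : IsMaxEdge w M e)
    (hbelow : ∀ f ∈ M, f ≠ e → w f + 2 * σ ≤ w e) (hP : ∀ f ∈ M, |P f| ≤ σ) :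
    IsMaxEdge (fun f => w f + P f) M e := by
  refine ⟨hmax.1, fun f hf => ?_⟩
  rcases eq_or_ne f e with rfl | hfe
  · exact le_rfl
  · exact add_le_add_of_add_two_mul_le (hbelow f hf hfe) (hP f hf) (hP e hmax.1)

lemma IsBottleneckEdge.exists_le_add (hbn : IsBottleneckEdge w E e) (he : e ∈ E)
    (habove : ∀ f ∈ E, f ≠ e → w e ≤ w f → w e + 2 * σ ≤ w f) (hP : ∀ f ∈ E, |P f| ≤ σ)
    {M' : Finset (V₁ × V₂)} (hM' : IsAssignment E M') :
    ∃ f ∈ M', w e + P e ≤ w f + P f := by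
  obtain ⟨f, hf, hle⟩ := hbn.exists_le hM'
  refine ⟨f, hf, ?_⟩
  rcases eq_or_ne f e with rfl | hfe
  · exact le_rfl
  · have hfE := hM'.1 hf
    exact add_le_add_of_add_two_mul_le (habove f hfE hfe hle) (hP e he) (hP f hfE)

theorem IsBottleneck.add_of_gaps (hbn : IsBottleneckEdge w E e) (hM : IsAssignment E M)
    (hmax : IsMaxEdge w M e) (habove : ∀ f ∈ E, f ≠ e → w e ≤ w f → w e + 2 * σ ≤ w f)
    (hbelow : ∀ f ∈ M, f ≠ e → w f + 2 * σ ≤ w e) (hP : ∀ f ∈ E, |P f| ≤ σ) :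
    IsBottleneckEdge (fun f => w f + P f) E e ∧ IsBottleneck (fun f => w f + P f) E M := by
  have hmax' := hmax.add hbelow fun f hf => hP f (hM.1 hf)
  have hbot := IsBottleneck.of_isMaxEdge hM hmax'
    fun _ hM' => hbn.exists_le_add (hM.1 hmax.1) habove hP hM'
  exact ⟨⟨M, hbot, hmax'⟩, hbot⟩

end Bottleneck

theorem stmt10_general {V₁ V₂ : Type*}
    [DecidableEq V₁] [DecidableEq V₂]
    (E : Finset (V₁ × V₂)) (w : V₁ × V₂ → ℝ)
    (estar : V₁ × V₂)
    (hbn : IsBottleneckEdge w E estar)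
    (M : Finset (V₁ × V₂)) (hM : IsAssignment E M)
    (hmax : IsMaxEdge w M estar) (hMne : (M.erase estar).Nonempty)
    (hSne : (E.filter fun e => e ≠ estar ∧ w estar ≤ w e).Nonempty) :
    0 ≤ min ((E.filter fun e => e ≠ estar ∧ w estar ≤ w e).inf' hSne
          fun e => (w e - w estar) / 2)
        ((M.erase estar).inf' hMne fun e => (w estar - w e) / 2) ∧
    ∀ P : V₁ × V₂ → ℝ,
      (∀ e ∈ E, |P e| ≤
        min ((E.filter fun e' => e' ≠ estar ∧ w estar ≤ w e').inf' hSne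
            fun e' => (w e' - w estar) / 2)
          ((M.erase estar).inf' hMne fun e' => (w estar - w e') / 2)) →
      IsBottleneckEdge (fun e => w e + P e) E estar ∧
        IsBottleneck (fun e => w e + P e) E M := by
  set σ := min ((E.filter fun e => e ≠ estar ∧ w estar ≤ w e).inf' hSne
      fun e => (w e - w estar) / 2) ((M.erase estar).inf' hMne fun e => (w estar - w e) / 2)
  have habove : ∀ f ∈ E, f ≠ estar → w estar ≤ w f → w estar + 2 * σ ≤ w f :=
    fun f hf hfe hle => by
      have : σ ≤ (w f - w estar) / 2 :=
        (min_le_left _ _).trans (Finset.inf'_le _ (Finset.mem_filter.mpr ⟨hf, hfe, hle⟩))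
      linarith
  have hbelow : ∀ f ∈ M, f ≠ estar → w f + 2 * σ ≤ w estar := fun f hf hfe => by
    have : σ ≤ (w estar - w f) / 2 :=
      (min_le_right _ _).trans (Finset.inf'_le _ (Finset.mem_erase.mpr ⟨hfe, hf⟩))
    linarith
  have hσ : 0 ≤ σ := le_min
    (Finset.le_inf' _ _ fun f hf => by linarith [(Finset.mem_filter.mp hf).2.2])
    (Finset.le_inf' _ _ fun f hf => by linarith [hmax.2 f (Finset.mem_of_mem_erase hf)])
  exact ⟨hσ, fun P hP => IsBottleneck.add_of_gaps hbn hM hmax habove hbelow hP⟩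

theorem stmt10 {V₁ V₂ : Type*} [Fintype V₁] [Fintype V₂] [Nonempty V₁] [Nonempty V₂]
    [DecidableEq V₁] [DecidableEq V₂]
    (hcard : Fintype.card V₂ ≤ Fintype.card V₁)
    (E : Finset (V₁ × V₂)) (w : V₁ × V₂ → ℝ)
    (hex : ∃ M, IsAssignment E M)
    (estar : V₁ × V₂) (he : estar ∈ E)
    (hbn : IsBottleneckEdge w E estar)
    (M : Finset (V₁ × V₂)) (hM : IsAssignment E M)
    (hmax : IsMaxEdge w M estar) (hMne : (M.erase estar).Nonempty)
    (hSne : (E.filter fun e => e ≠ estar ∧ w estar ≤ w e).Nonempty) :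
    0 ≤ min ((E.filter fun e => e ≠ estar ∧ w estar ≤ w e).inf' hSne
          fun e => (w e - w estar) / 2)
        ((M.erase estar).inf' hMne fun e => (w estar - w e) / 2) ∧
    ∀ P : V₁ × V₂ → ℝ,
      (∀ e ∈ E, |P e| ≤
        min ((E.filter fun e' => e' ≠ estar ∧ w estar ≤ w e').inf' hSne
            fun e' => (w e' - w estar) / 2)
          ((M.erase estar).inf' hMne fun e' => (w estar - w e') / 2)) →
      IsBottleneckEdge (fun e => w e + P e) E estar ∧
        IsBottleneck (fun e => w e + P e) E M :=
  stmt10_general E w estar hbn M hM hmax hMne hSne
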